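/- (Energy-dissipation balance law with local densities for two-time-level schemes.) Let d ≥ 1, p, r ∈ ℕ^d, and let a_{ℓ,σ} ∈ ℝ for −r ≤ ℓ ≤ p and σ = 0, 1, 2. Define bounded operators Q₀, Q₁, Q₂ on ℓ²(ℤ^d;ℝ) by (Q_σ v)(j) := Σ_{−r≤ℓ≤p} a_{ℓ,σ}·v(j+ℓ). Define, for x, y ∈ ℓ²(ℤ^d;ℝ): E(x,y) := 2‖Q₂y‖² + 2⟨Q₂y, Q₁x⟩ + ‖Q₂x‖² + ‖Q₀x‖² and D(x,y) := ‖Q₂y‖² − ‖Q₀y‖² + 2⟨Q₂y, Q₁x⟩ − 2⟨Q₁y, Q₀x⟩ + ‖Q₂x‖² − ‖Q₀x‖². Then for every sequence v : ℕ → ℓ²(ℤ^d;ℝ) and every n ∈ ℕ, setting Lv(n) := Q₀v(n) + Q₁v(n+1) + Q₂v(n+2) and Mv(n) := Q₁v(n+1) + 2Q₂v(n+2), one has 2·⟨Mv(n), Lv(n)⟩ = 2·‖Lv(n)‖² + E(v(n+1),v(n+2)) − E(v(n),v(n+1)) + D(v(n),v(n+1)). -/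

import Mathlib

/-- The finite difference operator `(Q_σ v)(j) = Σ_{−r≤ℓ≤p} a_{ℓ,σ} v(j+ℓ)` acting on
functions on `ℤ^d`. -/
noncomputable def Qact (d : ℕ) (p r : Fin d → ℕ) (a : (Fin d → ℤ) → ℕ → ℝ) (σ : ℕ)
    (v : (Fin d → ℤ) → ℝ) (j : Fin d → ℤ) : ℝ :=
  ∑ ℓ ∈ Finset.Icc (fun i => -(r i : ℤ)) (fun i => (p i : ℤ)), a ℓ σ * v (j + ℓ)

/-- The `ℓ²(ℤ^d;ℝ)` inner product `⟨u,v⟩ = Σ_j u(j) v(j)`. -/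
noncomputable def l2inner (d : ℕ) (u v : (Fin d → ℤ) → ℝ) : ℝ := ∑' j : Fin d → ℤ, u j * v j

/-- The squared `ℓ²(ℤ^d;ℝ)` norm `‖v‖² = Σ_j v(j)²`. -/
noncomputable def l2normSq (d : ℕ) (v : (Fin d → ℤ) → ℝ) : ℝ := ∑' j : Fin d → ℤ, (v j) ^ 2

/-- The energy functional `E(x,y) = 2‖Q₂y‖² + 2⟨Q₂y,Q₁x⟩ + ‖Q₂x‖² + ‖Q₀x‖²`. -/
noncomputable def Efun (d : ℕ) (p r : Fin d → ℕ) (a : (Fin d → ℤ) → ℕ → ℝ)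
    (x y : (Fin d → ℤ) → ℝ) : ℝ :=
  2 * l2normSq d (Qact d p r a 2 y) + 2 * l2inner d (Qact d p r a 2 y) (Qact d p r a 1 x)
    + l2normSq d (Qact d p r a 2 x) + l2normSq d (Qact d p r a 0 x)

/-- The dissipation functional
`D(x,y) = ‖Q₂y‖² − ‖Q₀y‖² + 2⟨Q₂y,Q₁x⟩ − 2⟨Q₁y,Q₀x⟩ + ‖Q₂x‖² − ‖Q₀x‖²`. -/
noncomputable def Dfun (d : ℕ) (p r : Fin d → ℕ) (a : (Fin d → ℤ) → ℕ → ℝ)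
    (x y : (Fin d → ℤ) → ℝ) : ℝ :=
  l2normSq d (Qact d p r a 2 y) - l2normSq d (Qact d p r a 0 y)
    + 2 * l2inner d (Qact d p r a 2 y) (Qact d p r a 1 x)
    - 2 * l2inner d (Qact d p r a 1 y) (Qact d p r a 0 x)
    + l2normSq d (Qact d p r a 2 x) - l2normSq d (Qact d p r a 0 x)

/-!
The two energies telescope: as a real identity in the norms and inner products,
`E(y,z) − E(x,y) + D(x,y) = 2‖Q₂z‖² + 2⟨Q₂z,Q₁y⟩ − 2‖Q₀x‖² − 2⟨Q₁y,Q₀x⟩`.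
With `A = Q₀x`, `B = Q₁y`, `C = Q₂z` the claim is then the Hilbert-space identity
`⟨B + 2C, A + B + C⟩ − ‖A + B + C‖² = ⟨C − A, A + B + C⟩`, applied in `ℓ²(ℤ^d)`, which the `Q_σ`
preserve because they are finite combinations of translations.
-/

open scoped InnerProductSpace ENNReal

theorem memℓp_two_iff_summable_sq {α : Type*} {f : α → ℝ} :
    Memℓp f 2 ↔ Summable fun i => f i ^ 2 := by
  rw [memℓp_gen_iff (by norm_num)]
  simp

theorem Memℓp.comp_equiv {α β E : Type*} [NormedAddCommGroup E] {p : ℝ≥0∞} {f : α → E}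
    (hf : Memℓp f p) (e : β ≃ α) : Memℓp (f ∘ e) p := by
  rcases p.trichotomy with rfl | rfl | hp
  · exact memℓp_zero (hf.finite_dsupport.preimage e.injective.injOn)
  · refine memℓp_infty ?_
    rw [show (fun i => ‖(f ∘ e) i‖) = (fun i => ‖f i‖) ∘ e from rfl, e.surjective.range_comp]
    exact hf.bddAbove
  · exact memℓp_gen ((e.summable_iff (f := fun i => ‖f i‖ ^ p.toReal)).mpr (hf.summable hp))

theorem memℓp_Qact (d : ℕ) (p r : Fin d → ℕ) (a : (Fin d → ℤ) → ℕ → ℝ) (σ : ℕ)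
    {q : ℝ≥0∞} {w : (Fin d → ℤ) → ℝ} (hw : Memℓp w q) : Memℓp (Qact d p r a σ w) q :=
  Memℓp.finsetSum _ fun ℓ _ => (hw.comp_equiv (Equiv.addRight ℓ)).const_mul (a ℓ σ)

theorem l2inner_coe {d : ℕ} (f g : lp (fun _ : Fin d → ℤ => ℝ) 2) :
    l2inner d f g = ⟪f, g⟫_ℝ := by
  simp [l2inner, lp.inner_eq_tsum, mul_comm]

theorem l2normSq_coe {d : ℕ} (f : lp (fun _ : Fin d → ℤ => ℝ) 2) :
    l2normSq d f = ‖f‖ ^ 2 := by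
  rw [← real_inner_self_eq_norm_sq, ← l2inner_coe]
  simp [l2normSq, l2inner, sq]

theorem inner_add_two_smul_add_add {F : Type*} [NormedAddCommGroup F] [InnerProductSpace ℝ F]
    (x y z : F) :
    ⟪y + (2 : ℝ) • z, x + y + z⟫_ℝ = ‖x + y + z‖ ^ 2 + ‖z‖ ^ 2 + ⟪z, y⟫_ℝ - ‖x‖ ^ 2 - ⟪y, x⟫_ℝ := by
  rw [← real_inner_self_eq_norm_sq, ← real_inner_self_eq_norm_sq, ← real_inner_self_eq_norm_sq]
  simp only [inner_add_left, inner_add_right, real_inner_smul_left, real_inner_comm x y,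
    real_inner_comm x z, real_inner_comm y z]
  ring

theorem l2inner_add_two_mul_add_add {d : ℕ} {x y z : (Fin d → ℤ) → ℝ}
    (hx : Memℓp x 2) (hy : Memℓp y 2) (hz : Memℓp z 2) :
    l2inner d (fun j => y j + 2 * z j) (fun j => x j + y j + z j)
      = l2normSq d (fun j => x j + y j + z j) + l2normSq d z + l2inner d z y
        - l2normSq d x - l2inner d y x := by
  obtain ⟨f, rfl⟩ : ∃ f : lp (fun _ : Fin d → ℤ => ℝ) 2, ⇑f = x := ⟨⟨x, hx⟩, rfl⟩
  obtain ⟨g, rfl⟩ : ∃ g : lp (fun _ : Fin d → ℤ => ℝ) 2, ⇑g = y := ⟨⟨y, hy⟩, rfl⟩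
  obtain ⟨h, rfl⟩ : ∃ h : lp (fun _ : Fin d → ℤ => ℝ) 2, ⇑h = z := ⟨⟨z, hz⟩, rfl⟩
  have key := inner_add_two_smul_add_add f g h
  rw [← l2inner_coe, ← l2inner_coe, ← l2inner_coe, ← l2normSq_coe, ← l2normSq_coe,
    ← l2normSq_coe] at key
  exact key

theorem Efun_sub_Efun_add_Dfun (d : ℕ) (p r : Fin d → ℕ) (a : (Fin d → ℤ) → ℕ → ℝ)
    (x y z : (Fin d → ℤ) → ℝ) :
    Efun d p r a y z - Efun d p r a x y + Dfun d p r a x y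
      = 2 * l2normSq d (Qact d p r a 2 z) + 2 * l2inner d (Qact d p r a 2 z) (Qact d p r a 1 y)
        - 2 * l2normSq d (Qact d p r a 0 x)
        - 2 * l2inner d (Qact d p r a 1 y) (Qact d p r a 0 x) := by
  unfold Efun Dfun
  ring

theorem stmt_15_general (d : ℕ) (p r : Fin d → ℕ) (a : (Fin d → ℤ) → ℕ → ℝ)
    (v : ℕ → (Fin d → ℤ) → ℝ) (hv : ∀ n, Summable fun j : Fin d → ℤ => (v n j) ^ 2)
    (n : ℕ) :
    2 * l2inner d
        (fun j => Qact d p r a 1 (v (n + 1)) j + 2 * Qact d p r a 2 (v (n + 2)) j)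
        (fun j => Qact d p r a 0 (v n) j + Qact d p r a 1 (v (n + 1)) j
          + Qact d p r a 2 (v (n + 2)) j)
    = 2 * l2normSq d (fun j => Qact d p r a 0 (v n) j + Qact d p r a 1 (v (n + 1)) j
          + Qact d p r a 2 (v (n + 2)) j)
      + Efun d p r a (v (n + 1)) (v (n + 2)) - Efun d p r a (v n) (v (n + 1))
      + Dfun d p r a (v n) (v (n + 1)) := by
  have hQ (σ m : ℕ) : Memℓp (Qact d p r a σ (v m)) 2 :=
    memℓp_Qact d p r a σ (memℓp_two_iff_summable_sq.mpr (hv m))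
  rw [add_sub_assoc, add_assoc, Efun_sub_Efun_add_Dfun,
    l2inner_add_two_mul_add_add (hQ 0 n) (hQ 1 (n + 1)) (hQ 2 (n + 2))]
  ring

/-- the energy-dissipation balance law with local densities for
two-time-level schemes: with `Lv(n) = Q₀v(n) + Q₁v(n+1) + Q₂v(n+2)` and
`Mv(n) = Q₁v(n+1) + 2Q₂v(n+2)`, one has
`2⟨Mv(n),Lv(n)⟩ = 2‖Lv(n)‖² + E(v(n+1),v(n+2)) − E(v(n),v(n+1)) + D(v(n),v(n+1))`. -/
theorem stmt_15 (d : ℕ) (hd : 1 ≤ d) (p r : Fin d → ℕ) (a : (Fin d → ℤ) → ℕ → ℝ)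
    (v : ℕ → (Fin d → ℤ) → ℝ) (hv : ∀ n, Summable fun j : Fin d → ℤ => (v n j) ^ 2)
    (n : ℕ) :
    2 * l2inner d
        (fun j => Qact d p r a 1 (v (n + 1)) j + 2 * Qact d p r a 2 (v (n + 2)) j)
        (fun j => Qact d p r a 0 (v n) j + Qact d p r a 1 (v (n + 1)) j
          + Qact d p r a 2 (v (n + 2)) j)
    = 2 * l2normSq d (fun j => Qact d p r a 0 (v n) j + Qact d p r a 1 (v (n + 1)) j
          + Qact d p r a 2 (v (n + 2)) j)
      + Efun d p r a (v (n + 1)) (v (n + 2)) - Efun d p r a (v n) (v (n + 1))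
      + Dfun d p r a (v n) (v (n + 1)) :=
  stmt_15_general d p r a v hv n
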